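/- arXiv:math/0512029 — 2 statements merged into one kernel-verified Lean document; each statement's English description precedes it below -/
import Mathlib

section
/- Under the same hypotheses (coefficients (a_n) satisfying the Hausdorff condition with jump function F ∈ L²(1,+∞), exact coefficients c_m with Σ_{m=0}^∞ |c_m|² = C = ∫_1^∞ |F|² dx, noisy coefficients c_m^{(j)} built from a_n^{(j)} with |a_n^{(j)} − a_n| ≤ ε_j, ε_j → 0, N_j → ∞, a_{N_j}^{(j)} ≠ 0, |c_0^{(j)}|² ≤ C, and truncation index k_0^{(j)} = max{k ∈ ℕ : Σ_{m=0}^{k} |c_m^{(j)}|² ≤ C}), one has lim_{j→∞} Σ_{m=0}^{k_0^{(j)}} |c_m^{(j)} − c_m|² = 0. -/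
open MeasureTheory Filter Finset Complex

/-- Finite-difference operator: `Δ^k f_j = ∑_{m=0}^k (-1)^m C(k,m) f_{j+k-m}`. -/
noncomputable def fdiff (f : ℕ → ℂ) (k j : ℕ) : ℂ :=
  ∑ m ∈ Finset.range (k + 1), (-1 : ℂ) ^ m * (k.choose m : ℂ) * f (j + k - m)

/-- Hausdorff condition on a sequence of complex numbers. -/
def HausdorffCond (f : ℕ → ℂ) : Prop :=
  ∃ M : ℝ, 0 < M ∧ ∃ ε : ℝ, 0 < ε ∧ ∀ n : ℕ,
    ((n : ℝ) + 1) ^ ((1 : ℝ) + ε) *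
      ∑ i ∈ Finset.range (n + 1),
        ((n.choose i : ℝ)) ^ ((2 : ℝ) + ε) * ‖fdiff f i (n - i)‖ ^ ((2 : ℝ) + ε) < M

/-- Pollaczek polynomials `P_0 = 1`, `P_1 = 2x`, `(m+1)P_{m+1} = 2x P_m - m P_{m-1}`. -/
noncomputable def pollaczek : ℕ → ℂ → ℂ
  | 0, _ => 1
  | 1, x => 2 * x
  | (m + 2), x => (2 * x * pollaczek (m + 1) x - ((m : ℂ) + 1) * pollaczek m x) / ((m : ℂ) + 2)

/-- Laguerre polynomials `L_0 = 1`, `L_1 = 1 - x`, `(m+1)L_{m+1} = (2m+1-x)L_m - m L_{m-1}`. -/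
noncomputable def laguerre : ℕ → ℝ → ℝ
  | 0, _ => 1
  | 1, x => 1 - x
  | (m + 2), x =>
      ((2 * ((m : ℝ) + 1) + 1 - x) * laguerre (m + 1) x - ((m : ℝ) + 1) * laguerre m x) /
        ((m : ℝ) + 2)

/-- Basis functions `φ_m(x) = √2 ⬝ i^m ⬝ L_m(2/x) ⬝ e^{-1/x} / x`. -/
noncomputable def phi (m : ℕ) (x : ℝ) : ℂ :=
  (Real.sqrt 2 : ℂ) * Complex.I ^ m * (laguerre m (2 / x) : ℂ) * (Real.exp (-(1 / x)) : ℂ) / (x : ℂ)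

/-- Exact expansion coefficients `c_m = √2 ∑_{n=0}^∞ ((-1)^n/n!) a_n P_m(-i(n+1/2))`. -/
noncomputable def cCoef (a : ℕ → ℂ) (m : ℕ) : ℂ :=
  (Real.sqrt 2 : ℂ) *
    ∑' n : ℕ, ((-1 : ℂ) ^ n / (n.factorial : ℂ)) * a n *
      pollaczek m (-Complex.I * ((n : ℂ) + 1 / 2))

/-- Truncated noisy coefficients `c_m^{(ε,N)} = √2 ∑_{n=0}^N ((-1)^n/n!) a_n^{(ε)} P_m(-i(n+1/2))`. -/
noncomputable def cNoisy (a : ℕ → ℂ) (N m : ℕ) : ℂ :=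
  (Real.sqrt 2 : ℂ) *
    ∑ n ∈ Finset.range (N + 1), ((-1 : ℂ) ^ n / (n.factorial : ℂ)) * a n *
      pollaczek m (-Complex.I * ((n : ℂ) + 1 / 2))

/-- The weight function `w(x) = (1/π) Γ(1/2 + ix) Γ(1/2 - ix)`. -/
noncomputable def wPol (x : ℝ) : ℂ :=
  (1 / (Real.pi : ℂ)) * Complex.Gamma (1 / 2 + Complex.I * x) * Complex.Gamma (1 / 2 - Complex.I * x)

/-- Pochhammer symbol `(a)_k = a (a+1) ⋯ (a+k-1)`. -/
noncomputable def poch (a : ℂ) (k : ℕ) : ℂ :=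
  ∏ j ∈ Finset.range k, (a + (j : ℂ))

/-!
Each noisy coefficient converges to the exact one: `c_m^{(j)} - c_m` is `√2` times
`∑_{n ≤ N_j} w_{m,n} (a_n^{(j)} - a_n)` plus a tail of the series defining `c_m`, where the weights
`w_{m,n} = (-1)^n P_m(-i(n+1/2)) / n!` are absolutely summable since `|P_m(x)| ≤ (2(1+|x|))^m`,
and `a` is bounded by the Hausdorff condition.

The truncation keeps the noisy energy `∑_{m ≤ k_0^{(j)}} |c_m^{(j)}|²` below `C = ∑ |c_m|²`, so for
any fixed `K` the error terms with `K < m ≤ k_0^{(j)}` are at most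
`2 (C - ∑_{m ≤ K} |c_m^{(j)}|²) + 2 (C - ∑_{m ≤ K} |c_m|²)`, which tends to `4 (C - ∑_{m ≤ K} |c_m|²)`;
the first `K` error terms tend to `0` by pointwise convergence. If `∑ |c_m|²` diverges, the
truncation index is eventually bounded instead.
-/

open scoped Nat Topology

theorem fdiff_zero (f : ℕ → ℂ) (j : ℕ) : fdiff f 0 j = f j := by
  simp [fdiff]

theorem HausdorffCond.exists_norm_le {f : ℕ → ℂ} (hf : HausdorffCond f) :
    ∃ A : ℝ, ∀ n, ‖f n‖ ≤ A := by
  obtain ⟨M, -, ε, hε, hM⟩ := hf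
  refine ⟨max 1 M, fun n => ?_⟩
  have hterm : ‖f n‖ ^ ((2 : ℝ) + ε) ≤ ∑ i ∈ range (n + 1),
      ((n.choose i : ℝ)) ^ ((2 : ℝ) + ε) * ‖fdiff f i (n - i)‖ ^ ((2 : ℝ) + ε) := by
    simpa [fdiff_zero] using single_le_sum (f := fun i =>
      ((n.choose i : ℝ)) ^ ((2 : ℝ) + ε) * ‖fdiff f i (n - i)‖ ^ ((2 : ℝ) + ε))
      (fun i _ => by positivity) (mem_range.2 n.succ_pos)
  have hweight : (1 : ℝ) ≤ ((n : ℝ) + 1) ^ ((1 : ℝ) + ε) :=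
    Real.one_le_rpow (by linarith [n.cast_nonneg (α := ℝ)]) (by linarith)
  have hlt : ‖f n‖ ^ ((2 : ℝ) + ε) < M :=
    (hterm.trans (le_mul_of_one_le_left (hterm.trans' (by positivity)) hweight)).trans_lt (hM n)
  rcases le_total ‖f n‖ 1 with hle | hge
  · exact hle.trans (le_max_left _ _)
  · exact ((Real.self_le_rpow_of_one_le hge (by linarith)).trans hlt.le).trans (le_max_right _ _)

theorem norm_pollaczek_le (x : ℂ) : ∀ m, ‖pollaczek m x‖ ≤ (2 * (1 + ‖x‖)) ^ m
  | 0 => by simp [pollaczek]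
  | 1 => by simp only [pollaczek, norm_mul, Complex.norm_ofNat, pow_one]; linarith
  | m + 2 => by
    set B := 2 * (1 + ‖x‖)
    have hB : 1 ≤ B := by linarith [norm_nonneg x]
    have ih₁ := norm_pollaczek_le x (m + 1)
    have ih₀ : ‖pollaczek m x‖ ≤ B ^ (m + 2) :=
      (norm_pollaczek_le x m).trans (pow_le_pow_right₀ hB (by omega))
    have hden : ‖(m : ℂ) + 2‖ = m + 2 := by exact_mod_cast Complex.norm_natCast (m + 2)
    have hcoef : ‖(m : ℂ) + 1‖ = m + 1 := by exact_mod_cast Complex.norm_natCast (m + 1)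
    rw [pollaczek, norm_div, hden, div_le_iff₀ (by positivity)]
    calc ‖2 * x * pollaczek (m + 1) x - ((m : ℂ) + 1) * pollaczek m x‖
        ≤ 2 * ‖x‖ * ‖pollaczek (m + 1) x‖ + (m + 1) * ‖pollaczek m x‖ := by
          refine (norm_sub_le _ _).trans_eq ?_
          rw [norm_mul, norm_mul, norm_mul, hcoef, Complex.norm_ofNat]
      _ ≤ B * B ^ (m + 1) + (m + 1) * B ^ (m + 2) := by
          gcongr
          linarith
      _ = B ^ (m + 2) * (m + 2) := by ring

theorem summable_mul_add_pow_div_factorial {a b : ℝ} (ha : 0 ≤ a) (hb : 0 ≤ b) (m : ℕ) :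
    Summable fun n : ℕ => (a * n + b) ^ m / n ! := by
  refine .of_nonneg_of_le (fun n => by positivity) (fun n => ?_)
    ((Real.summable_pow_div_factorial (Real.exp a)).mul_left (m ! * Real.exp b))
  have hexp : (a * n + b) ^ m ≤ m ! * (Real.exp b * Real.exp a ^ n) := by
    rw [← Real.exp_nat_mul, ← Real.exp_add, mul_comm (n : ℝ), add_comm b,
      ← div_le_iff₀' (by positivity)]
    exact Real.pow_div_factorial_le_exp _ (by positivity) m
  rw [mul_div_assoc', div_le_div_iff_of_pos_right (by positivity)]
  linarith

theorem tendsto_sum_range_mul_of_approx {𝕜 : Type*} [NormedRing 𝕜] [CompleteSpace 𝕜]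
    {w a : ℕ → 𝕜} {a' : ℕ → ℕ → 𝕜} {ε : ℕ → ℝ} {N : ℕ → ℕ}
    (hw : Summable fun n => ‖w n‖) (ha : ∃ A : ℝ, ∀ n, ‖a n‖ ≤ A)
    (hε : Tendsto ε atTop (𝓝 0)) (hN : Tendsto N atTop atTop)
    (ha' : ∀ j, ∀ n ≤ N j, ‖a' j n - a n‖ ≤ ε j) :
    Tendsto (fun j => ∑ n ∈ range (N j + 1), w n * a' j n) atTop (𝓝 (∑' n, w n * a n)) := by
  obtain ⟨A, hA⟩ := ha
  have hwa : Summable fun n => w n * a n :=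
    .of_norm_bounded (hw.mul_right A) fun n =>
      (norm_mul_le _ _).trans (mul_le_mul_of_nonneg_left (hA n) (norm_nonneg _))
  have hexact : Tendsto (fun j => ∑ n ∈ range (N j + 1), w n * a n) atTop
      (𝓝 (∑' n, w n * a n)) :=
    hwa.hasSum.tendsto_sum_nat.comp ((tendsto_add_atTop_nat 1).comp hN)
  have herror : Tendsto (fun j => ∑ n ∈ range (N j + 1), w n * (a' j n - a n)) atTop (𝓝 0) := by
    refine squeeze_zero_norm (fun j => ?_) (by simpa using hε.mul_const (∑' n, ‖w n‖))
    have hεj : 0 ≤ ε j := (norm_nonneg _).trans (ha' j 0 (Nat.zero_le _))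
    calc ‖∑ n ∈ range (N j + 1), w n * (a' j n - a n)‖
        ≤ ∑ n ∈ range (N j + 1), ‖w n‖ * ε j :=
          norm_sum_le_of_le _ fun n hn => (norm_mul_le _ _).trans <|
            mul_le_mul_of_nonneg_left (ha' j n (Nat.lt_succ_iff.1 (mem_range.1 hn))) (norm_nonneg _)
      _ ≤ (∑' n, ‖w n‖) * ε j := by
          rw [← sum_mul]
          exact mul_le_mul_of_nonneg_right (hw.sum_le_tsum _ fun n _ => norm_nonneg _) hεj
      _ = ε j * ∑' n, ‖w n‖ := mul_comm _ _
  simpa [mul_sub] using herror.add hexact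

noncomputable def pollaczekWeight (m n : ℕ) : ℂ :=
  (-1 : ℂ) ^ n / (n ! : ℂ) * pollaczek m (-Complex.I * ((n : ℂ) + 1 / 2))

theorem cCoef_eq (a : ℕ → ℂ) (m : ℕ) :
    cCoef a m = (Real.sqrt 2 : ℂ) * ∑' n, pollaczekWeight m n * a n := by
  simp only [cCoef, pollaczekWeight, mul_right_comm]

theorem cNoisy_eq (a : ℕ → ℂ) (N m : ℕ) :
    cNoisy a N m = (Real.sqrt 2 : ℂ) * ∑ n ∈ range (N + 1), pollaczekWeight m n * a n := by
  simp only [cNoisy, pollaczekWeight, mul_right_comm]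

theorem norm_pollaczekWeight_le (m n : ℕ) : ‖pollaczekWeight m n‖ ≤ (2 * n + 3) ^ m / n ! := by
  have hx : ‖-Complex.I * ((n : ℂ) + 1 / 2)‖ = n + 1 / 2 := by
    rw [norm_mul, norm_neg, Complex.norm_I, one_mul]
    have h := Complex.norm_of_nonneg (by positivity : (0 : ℝ) ≤ n + 1 / 2)
    push_cast at h
    exact h
  have hP := norm_pollaczek_le (-Complex.I * ((n : ℂ) + 1 / 2)) m
  rw [hx] at hP
  rw [pollaczekWeight, norm_mul, norm_div, norm_pow, norm_neg, norm_one, one_pow,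
    Complex.norm_natCast, one_div_mul_eq_div]
  gcongr
  exact hP.trans_eq (by ring_nf)

theorem summable_norm_pollaczekWeight (m : ℕ) : Summable fun n => ‖pollaczekWeight m n‖ :=
  .of_nonneg_of_le (fun _ => norm_nonneg _) (norm_pollaczekWeight_le m)
    (summable_mul_add_pow_div_factorial zero_le_two zero_le_three m)

theorem tendsto_cNoisy {a : ℕ → ℂ} (ha : HausdorffCond a) {ε : ℕ → ℝ} {N : ℕ → ℕ}
    (hε : Tendsto ε atTop (𝓝 0)) (hN : Tendsto N atTop atTop) {a' : ℕ → ℕ → ℂ}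
    (ha' : ∀ j, ∀ n ≤ N j, ‖a' j n - a n‖ ≤ ε j) (m : ℕ) :
    Tendsto (fun j => cNoisy (a' j) (N j) m) atTop (𝓝 (cCoef a m)) := by
  simp only [cNoisy_eq, cCoef_eq]
  exact (tendsto_sum_range_mul_of_approx (summable_norm_pollaczekWeight m) ha.exists_norm_le
    hε hN ha').const_mul _

theorem Nat.sSup_mem_of_ne_zero {s : Set ℕ} (h : sSup s ≠ 0) : sSup s ∈ s := by
  refine Nat.sSup_mem (Set.nonempty_iff_ne_empty.2 fun hs => h ?_) (not_not.1 fun hs => h ?_)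
  · rw [hs, csSup_empty, bot_eq_zero]
  · rw [csSup_of_not_bddAbove hs, csSup_empty, bot_eq_zero]

section Truncation

variable {E : Type*} [SeminormedAddCommGroup E]

theorem sum_range_norm_sub_sq_le {x y : ℕ → E} {C : ℝ} {K k : ℕ} (hKk : K ≤ k)
    (hx : ∑ m ∈ range k, ‖x m‖ ^ 2 ≤ C) (hy : ∑ m ∈ range k, ‖y m‖ ^ 2 ≤ C) :
    ∑ m ∈ range k, ‖x m - y m‖ ^ 2 ≤ ∑ m ∈ range K, ‖x m - y m‖ ^ 2
      + 2 * (C - ∑ m ∈ range K, ‖x m‖ ^ 2) + 2 * (C - ∑ m ∈ range K, ‖y m‖ ^ 2) := by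
  have hsplit (f : ℕ → ℝ) : ∑ m ∈ range k, f m = ∑ m ∈ range K, f m + ∑ m ∈ Ico K k, f m :=
    (sum_range_add_sum_Ico f hKk).symm
  have htail : ∑ m ∈ Ico K k, ‖x m - y m‖ ^ 2
      ≤ 2 * ∑ m ∈ Ico K k, ‖x m‖ ^ 2 + 2 * ∑ m ∈ Ico K k, ‖y m‖ ^ 2 := by
    rw [mul_sum, mul_sum, ← sum_add_distrib]
    refine sum_le_sum fun m _ => ?_
    calc ‖x m - y m‖ ^ 2 ≤ (‖x m‖ + ‖y m‖) ^ 2 := by gcongr; exact norm_sub_le _ _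
      _ ≤ 2 * ‖x m‖ ^ 2 + 2 * ‖y m‖ ^ 2 := by linarith [add_sq_le (a := ‖x m‖) (b := ‖y m‖)]
  rw [hsplit] at hx hy ⊢
  linarith

variable {x : ℕ → ℕ → E} {y : ℕ → E} {C : ℝ} {k : ℕ → ℕ}

theorem tendsto_sum_range_norm_sub_sq (hxy : ∀ m, Tendsto (fun j => x j m) atTop (𝓝 (y m)))
    (K : ℕ) : Tendsto (fun j => ∑ m ∈ range K, ‖x j m - y m‖ ^ 2) atTop (𝓝 0) := by
  simpa using tendsto_finsetSum (range K) fun m _ =>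
    (tendsto_iff_norm_sub_tendsto_zero.1 (hxy m)).pow 2

theorem tendsto_sum_range_norm_sub_sq_of_eventually_le
    (hxy : ∀ m, Tendsto (fun j => x j m) atTop (𝓝 (y m))) {K : ℕ}
    (hK : ∀ᶠ j in atTop, k j ≤ K) :
    Tendsto (fun j => ∑ m ∈ range (k j + 1), ‖x j m - y m‖ ^ 2) atTop (𝓝 0) :=
  squeeze_zero' (.of_forall fun j => sum_nonneg fun m _ => by positivity)
    (hK.mono fun j hj => sum_le_sum_of_subset_of_nonneg (range_subset_range.2 (by omega))
      fun m _ _ => by positivity)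
    (tendsto_sum_range_norm_sub_sq hxy (K + 1))

theorem eventually_le_of_lt_sum_range (hxy : ∀ m, Tendsto (fun j => x j m) atTop (𝓝 (y m)))
    (hk : ∀ j, k j = 0 ∨ ∑ m ∈ range (k j + 1), ‖x j m‖ ^ 2 ≤ C) {K : ℕ}
    (hK : C < ∑ m ∈ range (K + 1), ‖y m‖ ^ 2) : ∀ᶠ j in atTop, k j ≤ K := by
  have hx : ∀ᶠ j in atTop, C < ∑ m ∈ range (K + 1), ‖x j m‖ ^ 2 :=
    (tendsto_finsetSum _ fun m _ => (hxy m).norm.pow 2).eventually_const_lt hK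
  refine hx.mono fun j hj => not_lt.1 fun hKk => ?_
  have hle := (hk j).resolve_left (by omega)
  have hmono : ∑ m ∈ range (K + 1), ‖x j m‖ ^ 2 ≤ ∑ m ∈ range (k j + 1), ‖x j m‖ ^ 2 :=
    sum_le_sum_of_subset_of_nonneg (range_subset_range.2 (by omega)) fun m _ _ => by positivity
  linarith

theorem tendsto_sum_range_norm_sub_sq_of_truncation
    (hxy : ∀ m, Tendsto (fun j => x j m) atTop (𝓝 (y m))) (hC : ∑' m, ‖y m‖ ^ 2 = C)
    (hk : ∀ j, k j = 0 ∨ ∑ m ∈ range (k j + 1), ‖x j m‖ ^ 2 ≤ C) :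
    Tendsto (fun j => ∑ m ∈ range (k j + 1), ‖x j m - y m‖ ^ 2) atTop (𝓝 0) := by
  by_cases hy : Summable fun m => ‖y m‖ ^ 2
  · have hyC : HasSum (fun m => ‖y m‖ ^ 2) C := hC ▸ hy.hasSum
    refine tendsto_order.2 ⟨fun δ hδ => .of_forall fun j => hδ.trans_le
      (sum_nonneg fun m _ => by positivity), fun δ hδ => ?_⟩
    obtain ⟨K, hK⟩ : ∃ K, C - ∑ m ∈ range (K + 1), ‖y m‖ ^ 2 < δ / 8 :=
      ((hyC.tendsto_sum_nat.comp (tendsto_add_atTop_nat 1)).const_sub C |>.eventually_lt_const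
        (by rw [sub_self]; positivity)).exists
    have hdiff := (tendsto_sum_range_norm_sub_sq hxy (K + 1)).eventually_lt_const
      (by positivity : (0 : ℝ) < δ / 8)
    have hx : ∀ᶠ j in atTop, C - ∑ m ∈ range (K + 1), ‖x j m‖ ^ 2 < δ / 4 :=
      ((tendsto_finsetSum _ fun m _ => (hxy m).norm.pow 2).const_sub C).eventually_lt_const
        (by linarith)
    filter_upwards [hdiff, hx] with j hdiff hx
    rcases le_or_gt (k j) K with hkK | hKk
    · have hmono : ∑ m ∈ range (k j + 1), ‖x j m - y m‖ ^ 2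
          ≤ ∑ m ∈ range (K + 1), ‖x j m - y m‖ ^ 2 :=
        sum_le_sum_of_subset_of_nonneg (range_subset_range.2 (by omega)) fun m _ _ => by positivity
      linarith
    · have hbound := sum_range_norm_sub_sq_le (by omega : K + 1 ≤ k j + 1)
        ((hk j).resolve_left (by omega)) (sum_le_hasSum _ (fun m _ => by positivity) hyC)
      linarith
  · have hunbdd := (not_summable_iff_tendsto_nat_atTop_of_nonneg fun m => by positivity).1 hy
    obtain ⟨K, hK⟩ := ((hunbdd.comp (tendsto_add_atTop_nat 1)).eventually_gt_atTop C).exists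
    exact tendsto_sum_range_norm_sub_sq_of_eventually_le hxy (eventually_le_of_lt_sum_range hxy hk hK)

end Truncation

theorem statement11_general
    (a : ℕ → ℂ) (ha : HausdorffCond a)
    (C : ℝ)
    (hParseval : ∑' m : ℕ, ‖cCoef a m‖ ^ 2 = C)
    (ε : ℕ → ℝ) (N : ℕ → ℕ)
    (hε0 : Tendsto ε atTop (nhds 0)) (hN : Tendsto N atTop atTop)
    (a' : ℕ → ℕ → ℂ)
    (ha' : ∀ j, ∀ n ≤ N j, ‖a' j n - a n‖ ≤ ε j)
    (k0 : ℕ → ℕ)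
    (hk0 : ∀ j, k0 j =
      sSup {k : ℕ | ∑ m ∈ Finset.range (k + 1), ‖cNoisy (a' j) (N j) m‖ ^ 2 ≤ C})
    : Tendsto
        (fun j : ℕ => ∑ m ∈ Finset.range (k0 j + 1),
          ‖cNoisy (a' j) (N j) m - cCoef a m‖ ^ 2)
        atTop (nhds 0) := by
  refine tendsto_sum_range_norm_sub_sq_of_truncation (tendsto_cNoisy ha hε0 hN ha') hParseval
    fun j => ?_
  rw [hk0 j]
  -- `sSup` of an empty or unbounded set of naturals is `0`
  exact (eq_or_ne _ 0).imp_right Nat.sSup_mem_of_ne_zero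

/-- Σ_{m=0}^{k_0^{(j)}} |c_m^{(j)} - c_m|² → 0 as j → ∞. -/
theorem statement11
    (a : ℕ → ℂ) (ha : HausdorffCond a)
    (g : ℂ → ℂ)
    (hg : DifferentiableOn ℂ g {z : ℂ | ¬ (z.im = 0 ∧ 1 ≤ z.re)})
    (hgf : ∀ z : ℂ, ‖z‖ < 1 →
      g z = (1 / (2 * (Real.pi : ℂ))) * ∑' n : ℕ, a n * z ^ n)
    (F : ℝ → ℂ)
    (hF : MemLp F 2 (volume.restrict (Set.Ioi (1 : ℝ))))
    (hFjump : ∀ᵐ (x : ℝ) ∂(volume.restrict (Set.Ioi (1 : ℝ))),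
      ∃ fplus fminus : ℂ,
        Tendsto (fun η : ℝ => g ((x : ℂ) + (η : ℂ) * Complex.I))
          (nhdsWithin 0 (Set.Ioi (0 : ℝ))) (nhds fplus) ∧
        Tendsto (fun η : ℝ => g ((x : ℂ) - (η : ℂ) * Complex.I))
          (nhdsWithin 0 (Set.Ioi (0 : ℝ))) (nhds fminus) ∧
        F x = -Complex.I * (fplus - fminus))
    (C : ℝ) (hC : C = ∫ x in Set.Ioi (1 : ℝ), ‖F x‖ ^ 2)
    (hParseval : ∑' m : ℕ, ‖cCoef a m‖ ^ 2 = C)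
    (ε : ℕ → ℝ) (N : ℕ → ℕ)
    (hε : ∀ j, 0 < ε j) (hε0 : Tendsto ε atTop (nhds 0)) (hN : Tendsto N atTop atTop)
    (a' : ℕ → ℕ → ℂ)
    (ha' : ∀ j, ∀ n ≤ N j, ‖a' j n - a n‖ ≤ ε j)
    (haN' : ∀ j, a' j (N j) ≠ 0)
    (hc0 : ∀ j, ‖cNoisy (a' j) (N j) 0‖ ^ 2 ≤ C)
    (k0 : ℕ → ℕ)
    (hk0 : ∀ j, k0 j =
      sSup {k : ℕ | ∑ m ∈ Finset.range (k + 1), ‖cNoisy (a' j) (N j) m‖ ^ 2 ≤ C})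
    : Tendsto
        (fun j : ℕ => ∑ m ∈ Finset.range (k0 j + 1),
          ‖cNoisy (a' j) (N j) m - cCoef a m‖ ^ 2)
        atTop (nhds 0) :=
  statement11_general a ha C hParseval ε N hε0 hN a' ha' k0 hk0
end

section
/- For every fixed n ∈ ℕ, the Pollaczek polynomials satisfy the asymptotic relation P_m(−i(n+1/2)) ~ ((−1)^m i^m / n!) (2m)^n as m → ∞; precisely, lim_{m→∞} n! · P_m(−i(n+1/2)) / ((−1)^m i^m (2m)^n) = 1. -/
open MeasureTheory Filter Finset Complex

/-!
At `x = -i(n + 1/2)` the substitution `P_m(x) = (-i)^m D_m` turns the Pollaczek recurrence into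
`(m + 2) D_{m+2} = (2n + 1) D_{m+1} + (m + 1) D_m`, `D_0 = 1`, `D_1 = 2n + 1`, which is solved by the
Delannoy numbers `D(m, n) = ∑_k C(m, k) C(n, k) 2^k`. As a function of `m` this is a polynomial of
degree `n` whose top term `2^n C(m, n)` is asymptotic to `2^n m^n / n!`.
-/

open Asymptotics

lemma Nat.mul_choose_eq_succ_mul_choose_succ_add (n k : ℕ) :
    n * n.choose k = (k + 1) * n.choose (k + 1) + k * n.choose k := by
  rcases le_or_gt k n with hk | hk
  · rw [mul_comm (k + 1), Nat.choose_succ_right_eq, mul_comm k, ← Nat.mul_add,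
      Nat.sub_add_cancel hk, mul_comm]
  · simp [Nat.choose_eq_zero_of_lt hk, Nat.choose_eq_zero_of_lt (Nat.lt_succ_of_lt hk)]

def delannoy (m n : ℕ) : ℕ := ∑ k ∈ range (n + 1), m.choose k * n.choose k * 2 ^ k

def delannoyIncrement (m n : ℕ) : ℕ :=
  ∑ k ∈ range n, m.choose k * n.choose (k + 1) * 2 ^ (k + 1)

lemma delannoy_zero_left (n : ℕ) : delannoy 0 n = 1 := by
  rw [delannoy, sum_range_succ']
  simp

lemma delannoy_one_left (n : ℕ) : delannoy 1 n = 2 * n + 1 := by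
  rw [delannoy, sum_range_succ', sum_eq_single 0]
  · simp [add_comm, mul_comm]
  · intro k _ hk
    simp [Nat.choose_eq_zero_of_lt (by omega : 1 < k + 1)]
  · simp

lemma delannoy_succ_left (m n : ℕ) :
    delannoy (m + 1) n = delannoy m n + delannoyIncrement m n := by
  rw [delannoy, delannoy, delannoyIncrement, sum_range_succ', sum_range_succ' _ n]
  simp only [Nat.choose_succ_succ, add_mul, sum_add_distrib, Nat.choose_zero_right]
  ring

lemma delannoyIncrement_recurrence (m n : ℕ) :
    (m + 2) * delannoyIncrement (m + 1) n + (m + 1) * delannoyIncrement m n =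
      2 * n * delannoy (m + 1) n := by
  have hterm (k : ℕ) : (m + 2) * ((m + 1).choose k * n.choose (k + 1) * 2 ^ (k + 1)) +
      (m + 1) * (m.choose k * n.choose (k + 1) * 2 ^ (k + 1)) =
      (k + 1) * n.choose (k + 1) * 2 ^ (k + 1) * (m + 1).choose k +
        (k + 1) * n.choose (k + 1) * 2 ^ (k + 2) * (m + 1).choose (k + 1) := by
    linear_combination n.choose (k + 1) * 2 ^ (k + 1) *
        (Nat.add_one_mul_choose_eq (m + 1) k + Nat.add_one_mul_choose_eq m k) +
      (k + 1) * n.choose (k + 1) * 2 ^ (k + 1) * Nat.choose_succ_succ (m + 1) k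
  have hsplit : 2 * n * delannoy (m + 1) n =
      ∑ k ∈ range (n + 1), (k + 1) * n.choose (k + 1) * 2 ^ (k + 1) * (m + 1).choose k +
        ∑ k ∈ range (n + 1), k * n.choose k * 2 ^ (k + 1) * (m + 1).choose k := by
    rw [delannoy, mul_sum, ← sum_add_distrib]
    refine sum_congr rfl fun k _ => ?_
    linear_combination 2 * 2 ^ k * (m + 1).choose k * Nat.mul_choose_eq_succ_mul_choose_succ_add n k
  -- The `k = n` term of the first sum and the `k = 0` term of the second vanish; after shifting
  -- the second sum, the two sides agree termwise by `hterm`.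
  rw [hsplit, sum_range_succ, sum_range_succ', delannoyIncrement, delannoyIncrement, mul_sum,
    mul_sum, ← sum_add_distrib, Nat.choose_succ_self]
  simp only [hterm, mul_zero, zero_mul, add_zero, sum_add_distrib]

theorem delannoy_recurrence (m n : ℕ) :
    (m + 2) * delannoy (m + 2) n = (2 * n + 1) * delannoy (m + 1) n + (m + 1) * delannoy m n := by
  have h := delannoyIncrement_recurrence m n
  rw [delannoy_succ_left (m + 1), delannoy_succ_left m]
  rw [delannoy_succ_left m] at h
  linear_combination h

theorem pollaczek_eq_of_recurrence {x : ℂ} {u : ℕ → ℂ} (h0 : u 0 = 1) (h1 : u 1 = 2 * x)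
    (hrec : ∀ m : ℕ, ((m : ℂ) + 2) * u (m + 2) = 2 * x * u (m + 1) - ((m : ℂ) + 1) * u m)
    (m : ℕ) : pollaczek m x = u m := by
  induction m using Nat.twoStepInduction with
  | zero => simp [pollaczek, h0]
  | one => simp [pollaczek, h1]
  | more m ih0 ih1 =>
    rw [pollaczek, ih0, ih1, ← hrec, mul_div_cancel_left₀]
    exact_mod_cast (m + 1).succ_ne_zero

theorem pollaczek_neg_I_mul_add_half (n m : ℕ) :
    pollaczek m (-I * ((n : ℂ) + 1 / 2)) = (-I) ^ m * delannoy m n := by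
  refine pollaczek_eq_of_recurrence (u := fun m => (-I) ^ m * delannoy m n)
    (by simp [delannoy_zero_left]) (by simp [delannoy_one_left]; ring) (fun m => ?_) m
  have h := congrArg (Nat.cast : ℕ → ℂ) (delannoy_recurrence m n)
  push_cast at h
  linear_combination -(-I) ^ m * h +
    (-I) ^ m * ((m + 2) * delannoy (m + 2) n - (2 * n + 1) * delannoy (m + 1) n) * I_mul_I

lemma isLittleO_choose_pow_of_lt {j n : ℕ} (h : j < n) :
    (fun m : ℕ => (m.choose j : ℝ)) =o[atTop] (fun m : ℕ => (m : ℝ) ^ n) :=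
  (isTheta_choose j).trans_isLittleO (isLittleO_pow_pow_atTop_of_lt h).natCast_atTop

theorem isEquivalent_delannoy (n : ℕ) :
    (fun m : ℕ => (delannoy m n : ℝ)) ~[atTop]
      fun m : ℕ => 2 ^ n / n.factorial * (m : ℝ) ^ n := by
  have hsplit : (fun m : ℕ => (delannoy m n : ℝ)) =
      (fun m : ℕ => (m.choose n : ℝ) * 2 ^ n) +
        fun m : ℕ => ∑ k ∈ range n, (n.choose k * 2 ^ k : ℝ) * m.choose k := by
    ext m
    push_cast [delannoy, sum_range_succ, Nat.choose_self, mul_one, Pi.add_apply]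
    rw [add_comm]
    exact congrArg _ (sum_congr rfl fun k _ => by ring)
  have hlead : (fun m : ℕ => (m.choose n : ℝ) * 2 ^ n) ~[atTop]
      fun m : ℕ => 2 ^ n / n.factorial * (m : ℝ) ^ n := by
    refine ((isEquivalent_choose n).mul IsEquivalent.refl).congr_right ?_
    filter_upwards with m
    simp only [Pi.mul_apply]
    ring
  have hlower :
      (fun m : ℕ => ∑ k ∈ range n, (n.choose k * 2 ^ k : ℝ) * m.choose k) =o[atTop]
      fun m : ℕ => 2 ^ n / n.factorial * (m : ℝ) ^ n := by
    refine IsLittleO.fun_sum fun k hk => ?_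
    refine ((isLittleO_choose_pow_of_lt (mem_range.mp hk)).const_mul_left _).const_mul_right ?_
    positivity
  rw [hsplit]
  exact hlead.add_isLittleO hlower

theorem tendsto_factorial_mul_delannoy_div (n : ℕ) :
    Tendsto (fun m : ℕ => (n.factorial * delannoy m n / (2 * m) ^ n : ℝ)) atTop (nhds 1) := by
  have hne : ∀ᶠ m : ℕ in atTop, 2 ^ n / n.factorial * (m : ℝ) ^ n ≠ 0 := by
    filter_upwards [eventually_ne_atTop 0] with m hm
    simp [hm, Nat.factorial_ne_zero]
  refine ((isEquivalent_iff_tendsto_one hne).mp (isEquivalent_delannoy n)).congr fun m => ?_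
  rw [Pi.div_apply, mul_pow, div_mul_eq_mul_div, div_div_eq_mul_div, mul_comm,
    mul_comm (2 ^ n : ℝ)]

/-- Asymptotic behavior of the Pollaczek polynomials:
P_m(-i(n+1/2)) ~ ((-1)^m i^m / n!) (2m)^n as m → ∞, for each fixed n. -/
theorem statement13 (n : ℕ) :
    Tendsto
      (fun m : ℕ =>
        (n.factorial : ℂ) * pollaczek m (-Complex.I * ((n : ℂ) + 1 / 2)) /
          ((-1 : ℂ) ^ m * Complex.I ^ m * (2 * (m : ℂ)) ^ n))
      atTop (nhds 1) := by
  refine (tendsto_factorial_mul_delannoy_div n).ofReal.congr fun m => ?_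
  rw [pollaczek_neg_I_mul_add_half, ← mul_pow, neg_one_mul, mul_left_comm,
    mul_div_mul_left _ _ (pow_ne_zero m (neg_ne_zero.mpr I_ne_zero))]
  push_cast
  rfl
end
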